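/- (Doeblin minorization for the renewal semigroup) Let β be continuous with β_min·1_{[a_*,∞)} ≤ β ≤ β_max and let (M_t) be the dual renewal semigroup. Fix η > 0, set t₀ = a_* + η and c = η·β_min·e^{−β_max(a_*+η)}, and let ν be the uniform probability measure on [0,η]. Then for every nonnegative f₀ ∈ C_b([0,∞)), every t ≥ t₀ and every a ≥ 0: M_t f₀(a) ≥ c·(ν f₀), where ν f₀ = (1/η)∫₀^η f₀(a)da. -/

import Mathlib

open MeasureTheory intervalIntegral

/-- `f` is a bounded continuous solution of the Duhamel fixed-point formulation of
the dual renewal equation with initial datum `f₀`. -/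
def IsDuhamelSol (β f₀ : ℝ → ℝ) (f : ℝ → ℝ → ℝ) : Prop :=
  (Continuous fun p : ℝ × ℝ => f p.1 p.2) ∧
  (∃ C, ∀ t a, 0 ≤ t → 0 ≤ a → |f t a| ≤ C) ∧
  ∀ t a, 0 ≤ t → 0 ≤ a →
    f t a = f₀ (a + t) * Real.exp (-∫ u in (0:ℝ)..t, β (a + u)) +
      ∫ τ in (0:ℝ)..t, Real.exp (-∫ u in (0:ℝ)..τ, β (a + u)) * β (a + τ) * f (t - τ) 0

/-!
The renewal integral in the Duhamel formula is an average of `f(t - τ, 0)` against the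
density `e^{-∫₀^τ β(a+u)du} β(a+τ)` of the next renewal time. Renewals at
`τ ∈ [t - η, t]` happen at age `≥ a_*`, hence at rate `≥ β_min`, and restart from
`f(t - τ, 0) ≥ f₀(t - τ) e^{-β_max (t - τ)}`; since the survival up to `τ` is at least
`e^{-∫₀^D β(a+u)du} e^{-β_max (τ - D)}` with `D = t - a_* - η`, these renewals contribute at
least `e^{-∫₀^D β(a+u)du} c ν f₀`. Renewals before `D` restart at times
`≥ a_* + η`, where by a minimum principle for the continuous function `s ↦ f(s, 0)` the
bound `c ν f₀` already holds. Both contributions together give `f(t, a) ≥ c ν f₀`.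
-/

theorem Continuous.le_of_forall_lt_of_le_Icc {g : ℝ → ℝ} (hg : Continuous g) {t₀ c : ℝ}
    (h : ∀ s, t₀ ≤ s → ∀ m < c, (∀ r ∈ Set.Icc t₀ s, m ≤ g r) → m < g s) {s : ℝ}
    (hs : t₀ ≤ s) : c ≤ g s := by
  obtain ⟨s₀, hs₀, hmin⟩ :=
    isCompact_Icc.exists_isMinOn (Set.nonempty_Icc.mpr hs) hg.continuousOn
  have hle : ∀ r ∈ Set.Icc t₀ s, g s₀ ≤ g r := fun r hr => hmin hr
  refine le_trans ?_ (hle s ⟨hs, le_rfl⟩)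
  by_contra! hlt
  exact (h s₀ hs₀.1 (g s₀) hlt fun r hr => hle r ⟨hr.1, hr.2.trans hs₀.2⟩).false

namespace DualRenewal

variable {β : ℝ → ℝ}

/-- Probability that an individual of age `a` survives a further time `τ`;
`τ ↦ survival β a τ * β (a + τ)` is the density of its next renewal. -/
noncomputable def survival (β : ℝ → ℝ) (a τ : ℝ) : ℝ :=
  Real.exp (-∫ u in (0:ℝ)..τ, β (a + u))

theorem survival_pos (β : ℝ → ℝ) (a τ : ℝ) : 0 < survival β a τ := Real.exp_pos _

theorem survival_zero (β : ℝ → ℝ) (a : ℝ) : survival β a 0 = 1 := by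
  simp [survival]

theorem continuous_survival (hβ : Continuous β) (a : ℝ) : Continuous (survival β a) :=
  Real.continuous_exp.comp
    (intervalIntegral.continuous_primitive
      (fun _ _ => (hβ.comp (continuous_const_add a)).intervalIntegrable _ _) 0).neg

theorem integral_survival_mul (hβ : Continuous β) (a A B : ℝ) :
    ∫ τ in A..B, survival β a τ * β (a + τ) = survival β a A - survival β a B := by
  have hderiv : ∀ x, HasDerivAt (fun τ => -survival β a τ) (survival β a x * β (a + x)) x := by
    intro x
    have h : HasDerivAt (fun τ => -survival β a τ) (-(survival β a x * -β (a + x))) x :=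
      (((hβ.comp (continuous_const_add a)).integral_hasStrictDerivAt 0 x).hasDerivAt.neg.exp).neg
    simpa only [mul_neg, neg_neg] using h
  rw [intervalIntegral.integral_eq_sub_of_hasDerivAt (fun x _ => hderiv x)
    (((continuous_survival hβ a).mul (hβ.comp (continuous_const_add a))).intervalIntegrable A B)]
  ring

theorem survival_mul_exp_le (hβ : Continuous β) {βmax : ℝ} (hβbd : ∀ a, 0 ≤ a → β a ≤ βmax)
    {a D τ : ℝ} (ha : 0 ≤ a) (hD : 0 ≤ D) (hDτ : D ≤ τ) :
    survival β a D * Real.exp (-(βmax * (τ - D))) ≤ survival β a τ := by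
  have hsplit : (∫ u in (0:ℝ)..D, β (a + u)) + ∫ u in D..τ, β (a + u)
      = ∫ u in (0:ℝ)..τ, β (a + u) :=
    intervalIntegral.integral_add_adjacent_intervals
      ((hβ.comp (continuous_const_add a)).intervalIntegrable _ _)
      ((hβ.comp (continuous_const_add a)).intervalIntegrable _ _)
  have hbound : ∫ u in D..τ, β (a + u) ≤ βmax * (τ - D) := by
    have := intervalIntegral.integral_mono_on hDτ
      ((hβ.comp (continuous_const_add a)).intervalIntegrable D τ)
      (intervalIntegrable_const (μ := volume))
      (fun u hu => hβbd (a + u) (by linarith [hu.1]))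
    simpa [mul_comm] using this
  rw [survival, survival, ← Real.exp_add, Real.exp_le_exp, ← hsplit]
  linarith

theorem mul_sub_le_integral_survival_mul (hβ : Continuous β) (hβpos : ∀ a, 0 ≤ a → 0 ≤ β a)
    {h : ℝ → ℝ} (hh : Continuous h) {a A B m : ℝ} (ha : 0 ≤ a) (hA : 0 ≤ A) (hAB : A ≤ B)
    (hm : ∀ τ ∈ Set.Icc A B, m ≤ h τ) :
    m * (survival β a A - survival β a B) ≤ ∫ τ in A..B, survival β a τ * β (a + τ) * h τ := by
  have hk : Continuous fun τ => survival β a τ * β (a + τ) :=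
    (continuous_survival hβ a).mul (hβ.comp (continuous_const_add a))
  rw [← integral_survival_mul hβ, ← intervalIntegral.integral_const_mul]
  refine intervalIntegral.integral_mono_on hAB ((continuous_const.mul hk).intervalIntegrable _ _)
    ((hk.mul hh).intervalIntegrable _ _) fun τ hτ => ?_
  rw [mul_comm m]
  exact mul_le_mul_of_nonneg_left (hm τ hτ)
    (mul_nonneg (survival_pos β a τ).le (hβpos _ (by linarith [hτ.1])))

end DualRenewal

namespace IsDuhamelSol

open DualRenewal

variable {β f₀ : ℝ → ℝ} {f : ℝ → ℝ → ℝ}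

theorem apply_eq (hf : IsDuhamelSol β f₀ f) {t a : ℝ} (ht : 0 ≤ t) (ha : 0 ≤ a) :
    f t a = f₀ (a + t) * survival β a t +
      ∫ τ in (0:ℝ)..t, survival β a τ * β (a + τ) * f (t - τ) 0 :=
  hf.2.2 t a ht ha

theorem continuous_sub_boundary (hf : IsDuhamelSol β f₀ f) (t : ℝ) :
    Continuous fun τ => f (t - τ) 0 :=
  hf.1.comp ((continuous_const.sub continuous_id).prodMk continuous_const)

theorem continuous_boundary (hf : IsDuhamelSol β f₀ f) : Continuous fun s => f s 0 :=
  hf.1.comp (continuous_id.prodMk continuous_const)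

theorem add_mul_le (hf : IsDuhamelSol β f₀ f) (hβ : Continuous β)
    (hβpos : ∀ a, 0 ≤ a → 0 ≤ β a) {t a m : ℝ} (ht : 0 ≤ t) (ha : 0 ≤ a)
    (hm : ∀ s ∈ Set.Icc 0 t, m ≤ f s 0) :
    f₀ (a + t) * survival β a t + m * (1 - survival β a t) ≤ f t a := by
  have := mul_sub_le_integral_survival_mul hβ hβpos (hf.continuous_sub_boundary t) ha le_rfl ht
    (m := m) fun τ hτ => hm _ ⟨by linarith [hτ.2], by linarith [hτ.1]⟩
  rw [survival_zero] at this
  rw [hf.apply_eq ht ha]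
  linarith

theorem nonneg (hf : IsDuhamelSol β f₀ f) (hβ : Continuous β) (hβpos : ∀ a, 0 ≤ a → 0 ≤ β a)
    (hf₀pos : ∀ a, 0 ≤ a → 0 ≤ f₀ a) {t a : ℝ} (ht : 0 ≤ t) (ha : 0 ≤ a) : 0 ≤ f t a := by
  have hboundary : ∀ s, 0 ≤ s → 0 ≤ f s 0 := fun _ =>
    hf.continuous_boundary.le_of_forall_lt_of_le_Icc fun s hs m hm hle => by
      nlinarith [hf.add_mul_le hβ hβpos hs le_rfl hle, survival_pos β 0 s,
        mul_nonneg (hf₀pos (0 + s) (by linarith)) (survival_pos β 0 s).le]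
  have := hf.add_mul_le hβ hβpos ht ha (m := 0) fun s hs => hboundary s hs.1
  linarith [mul_nonneg (hf₀pos (a + t) (by linarith)) (survival_pos β a t).le]

theorem mul_exp_le (hf : IsDuhamelSol β f₀ f) (hβ : Continuous β)
    (hβpos : ∀ a, 0 ≤ a → 0 ≤ β a) {βmax : ℝ} (hβbd : ∀ a, 0 ≤ a → β a ≤ βmax)
    (hf₀pos : ∀ a, 0 ≤ a → 0 ≤ f₀ a) {s : ℝ} (hs : 0 ≤ s) :
    f₀ s * Real.exp (-(βmax * s)) ≤ f s 0 := by
  have hS := survival_mul_exp_le hβ hβbd le_rfl le_rfl hs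
  rw [survival_zero, one_mul, sub_zero] at hS
  have := hf.add_mul_le hβ hβpos hs le_rfl (m := 0)
    fun r hr => hf.nonneg hβ hβpos hf₀pos hr.1 le_rfl
  rw [zero_add, zero_mul, add_zero] at this
  exact (mul_le_mul_of_nonneg_left hS (hf₀pos s hs)).trans this

theorem survival_mul_le_integral (hf : IsDuhamelSol β f₀ f) (hβ : Continuous β)
    (hβpos : ∀ a, 0 ≤ a → 0 ≤ β a) {astar βmin βmax η : ℝ} (hastar : 0 ≤ astar) (hη : 0 ≤ η)
    (hβmin : 0 ≤ βmin) (hβlow : ∀ a, astar ≤ a → βmin ≤ β a)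
    (hβbd : ∀ a, 0 ≤ a → β a ≤ βmax) (hf₀cont : Continuous f₀)
    (hf₀pos : ∀ a, 0 ≤ a → 0 ≤ f₀ a) {t a : ℝ} (ht : astar + η ≤ t) (ha : 0 ≤ a) :
    survival β a (t - (astar + η)) *
        (βmin * Real.exp (-(βmax * (astar + η))) * ∫ x in (0:ℝ)..η, f₀ x)
      ≤ ∫ τ in (t - η)..t, survival β a τ * β (a + τ) * f (t - τ) 0 := by
  set D := t - (astar + η) with hD
  have hlhs : survival β a D * (βmin * Real.exp (-(βmax * (astar + η))) * ∫ x in (0:ℝ)..η, f₀ x)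
      = ∫ τ in (t - η)..t,
          survival β a D * βmin * Real.exp (-(βmax * (astar + η))) * f₀ (t - τ) := by
    rw [intervalIntegral.integral_const_mul, intervalIntegral.integral_comp_sub_left f₀ t,
      sub_self, sub_sub_cancel]
    ring
  rw [hlhs]
  refine intervalIntegral.integral_mono_on (by linarith)
    ((continuous_const.mul (hf₀cont.comp (continuous_sub_left t))).intervalIntegrable _ _)
    ((((continuous_survival hβ a).mul (hβ.comp (continuous_const_add a))).mul
      (hf.continuous_sub_boundary t)).intervalIntegrable _ _) fun τ hτ => ?_
  have hsplit : Real.exp (-(βmax * (astar + η)))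
      = Real.exp (-(βmax * (τ - D))) * Real.exp (-(βmax * (t - τ))) := by
    rw [← Real.exp_add, hD]
    ring_nf
  calc survival β a D * βmin * Real.exp (-(βmax * (astar + η))) * f₀ (t - τ)
      = (survival β a D * Real.exp (-(βmax * (τ - D)))) * βmin *
          (f₀ (t - τ) * Real.exp (-(βmax * (t - τ)))) := by rw [hsplit]; ring
    _ ≤ survival β a τ * β (a + τ) * f (t - τ) 0 := by
      refine mul_le_mul (mul_le_mul ?_ ?_ hβmin (survival_pos β a τ).le) ?_
        (mul_nonneg (hf₀pos _ (by linarith [hτ.2])) (Real.exp_pos _).le)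
        (mul_nonneg (survival_pos β a τ).le (hβpos _ (by linarith [hτ.1])))
      · exact survival_mul_exp_le hβ hβbd ha (by linarith) (by linarith [hτ.1])
      · exact hβlow _ (by linarith [hτ.1])
      · exact hf.mul_exp_le hβ hβpos hβbd hf₀pos (by linarith [hτ.2])

theorem mul_add_le (hf : IsDuhamelSol β f₀ f) (hβ : Continuous β)
    (hβpos : ∀ a, 0 ≤ a → 0 ≤ β a) {astar βmin βmax η : ℝ} (hastar : 0 ≤ astar) (hη : 0 ≤ η)
    (hβmin : 0 ≤ βmin) (hβlow : ∀ a, astar ≤ a → βmin ≤ β a)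
    (hβbd : ∀ a, 0 ≤ a → β a ≤ βmax) (hf₀cont : Continuous f₀)
    (hf₀pos : ∀ a, 0 ≤ a → 0 ≤ f₀ a) {t a m : ℝ} (ht : astar + η ≤ t) (ha : 0 ≤ a)
    (hm : ∀ s ∈ Set.Icc (astar + η) t, m ≤ f s 0) :
    m * (1 - survival β a (t - (astar + η))) + survival β a (t - (astar + η)) *
        (βmin * Real.exp (-(βmax * (astar + η))) * ∫ x in (0:ℝ)..η, f₀ x)
      ≤ f t a := by
  set D := t - (astar + η)
  have hK : Continuous fun τ => survival β a τ * β (a + τ) * f (t - τ) 0 :=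
    ((continuous_survival hβ a).mul (hβ.comp (continuous_const_add a))).mul
      (hf.continuous_sub_boundary t)
  have hsplit : ∫ τ in (0:ℝ)..t, survival β a τ * β (a + τ) * f (t - τ) 0
      = (∫ τ in (0:ℝ)..D, survival β a τ * β (a + τ) * f (t - τ) 0)
        + (∫ τ in D..(t - η), survival β a τ * β (a + τ) * f (t - τ) 0)
        + ∫ τ in (t - η)..t, survival β a τ * β (a + τ) * f (t - τ) 0 := by
    rw [intervalIntegral.integral_add_adjacent_intervals (hK.intervalIntegrable _ _)
        (hK.intervalIntegrable _ _),
      intervalIntegral.integral_add_adjacent_intervals (hK.intervalIntegrable _ _)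
        (hK.intervalIntegrable _ _)]
  have hold := mul_sub_le_integral_survival_mul hβ hβpos (hf.continuous_sub_boundary t) ha le_rfl
    (by linarith : 0 ≤ D) (m := m) fun τ hτ => hm _ ⟨by linarith [hτ.2], by linarith [hτ.1]⟩
  have hmiddle := mul_sub_le_integral_survival_mul hβ hβpos (hf.continuous_sub_boundary t) ha
    (by linarith : 0 ≤ D) (by linarith : D ≤ t - η) (m := 0)
    fun τ hτ => hf.nonneg hβ hβpos hf₀pos (by linarith [hτ.2]) le_rfl
  have hfresh := hf.survival_mul_le_integral hβ hβpos hastar hη hβmin hβlow hβbd hf₀cont hf₀pos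
    ht ha
  have hinitial := mul_nonneg (hf₀pos (a + t) (by linarith)) (survival_pos β a t).le
  rw [survival_zero] at hold
  rw [hf.apply_eq (by linarith) ha, hsplit]
  linarith

end IsDuhamelSol

open DualRenewal in
theorem stmt15_general (β f₀ : ℝ → ℝ) (astar βmin βmax η : ℝ)
    (hastar : 0 < astar) (hβmin : 0 < βmin) (hη : 0 < η)
    (hβcont : Continuous β) (hβpos : ∀ a, 0 ≤ a → 0 ≤ β a)
    (hβlow : ∀ a, astar ≤ a → βmin ≤ β a) (hβbd : ∀ a, 0 ≤ a → β a ≤ βmax)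
    (hf₀cont : Continuous f₀)
    (hf₀pos : ∀ a, 0 ≤ a → 0 ≤ f₀ a)
    (f : ℝ → ℝ → ℝ) (hf : IsDuhamelSol β f₀ f) :
    ∀ t a, astar + η ≤ t → 0 ≤ a →
      η * βmin * Real.exp (-βmax * (astar + η)) * ((1 / η) * ∫ x in (0:ℝ)..η, f₀ x)
        ≤ f t a := by
  intro t a ht ha
  set c := βmin * Real.exp (-(βmax * (astar + η))) * ∫ x in (0:ℝ)..η, f₀ x
  -- at a running minimum `m < c` of `s ↦ f s 0`, the renewal step gives `f s 0 > m`
  have hboundary : ∀ s, astar + η ≤ s → c ≤ f s 0 := fun _ =>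
    hf.continuous_boundary.le_of_forall_lt_of_le_Icc fun s hs m hm hle => by
      nlinarith [survival_pos β 0 (s - (astar + η)), hf.mul_add_le hβcont hβpos hastar.le hη.le
        hβmin.le hβlow hβbd hf₀cont hf₀pos hs le_rfl hle]
  calc η * βmin * Real.exp (-βmax * (astar + η)) * ((1 / η) * ∫ x in (0:ℝ)..η, f₀ x)
      = c * (1 - survival β a (t - (astar + η))) + survival β a (t - (astar + η)) * c := by
        rw [neg_mul]; field_simp; ring
    _ ≤ f t a := hf.mul_add_le hβcont hβpos hastar.le hη.le hβmin.le hβlow hβbd hf₀cont hf₀pos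
          ht ha fun s hs => hboundary s hs.1

/-- Doeblin minorization for the renewal semigroup: for `t₀ = a_* + η`
and `c = η β_min e^{−β_max(a_*+η)}`, the solution `M_t f₀` of the dual renewal equation
with nonnegative data `f₀` satisfies `M_t f₀(a) ≥ c (ν f₀)` for `t ≥ t₀`, `a ≥ 0`,
where `ν f₀ = (1/η)∫₀^η f₀`. -/
theorem stmt15 (β f₀ : ℝ → ℝ) (astar βmin βmax η : ℝ)
    (hastar : 0 < astar) (hβmin : 0 < βmin) (hβmax : 0 < βmax) (hη : 0 < η)
    (hβcont : Continuous β) (hβpos : ∀ a, 0 ≤ a → 0 ≤ β a)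
    (hβlow : ∀ a, astar ≤ a → βmin ≤ β a) (hβbd : ∀ a, 0 ≤ a → β a ≤ βmax)
    (hf₀cont : Continuous f₀) (hf₀bd : ∃ C, ∀ a, 0 ≤ a → |f₀ a| ≤ C)
    (hf₀pos : ∀ a, 0 ≤ a → 0 ≤ f₀ a)
    (f : ℝ → ℝ → ℝ) (hf : IsDuhamelSol β f₀ f) :
    ∀ t a, astar + η ≤ t → 0 ≤ a →
      η * βmin * Real.exp (-βmax * (astar + η)) * ((1 / η) * ∫ x in (0:ℝ)..η, f₀ x)
        ≤ f t a :=
  stmt15_general β f₀ astar βmin βmax η hastar hβmin hη hβcont hβpos hβlow hβbd hf₀cont hf₀pos f hf
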